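/- Let A ∈ ℝ^{m×n} have full column rank (rank(A) = n) and let B ∈ ℝ^{n×p} be a nonzero matrix. Denote by σ_min(·) the smallest nonzero singular value of a matrix. Then σ_min(AB) ≥ σ_min(A)·σ_min(B). -/

import Mathlib

open Matrix MeasureTheory ProbabilityTheory BigOperators

noncomputable section

/-- Frobenius norm of a real matrix. -/
def frob {m n : ℕ} (M : Matrix (Fin m) (Fin n) ℝ) : ℝ :=
  Real.sqrt (∑ i, ∑ j, (M i j) ^ 2)

/-- Euclidean norm of a vector in `ℝⁿ`. -/
def vnorm {n : ℕ} (v : Fin n → ℝ) : ℝ :=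
  Real.sqrt (∑ i, (v i) ^ 2)

/-- Spectral norm (operator 2-norm) of a real matrix. -/
def spec {m n : ℕ} (M : Matrix (Fin m) (Fin n) ℝ) : ℝ :=
  ‖LinearMap.toContinuousLinearMap (Matrix.toEuclideanLin M)‖

theorem isHermitian_tmul {m n : ℕ} (M : Matrix (Fin m) (Fin n) ℝ) :
    (Mᵀ * M).IsHermitian := by
  simpa [Matrix.conjTranspose_eq_transpose_of_trivial] using
    Matrix.isHermitian_conjTranspose_mul_self M

theorem posSemidef_tmul {m n : ℕ} (M : Matrix (Fin m) (Fin n) ℝ) :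
    (Mᵀ * M).PosSemidef := by
  simpa [Matrix.conjTranspose_eq_transpose_of_trivial] using
    Matrix.posSemidef_conjTranspose_mul_self M

/-- The `i`-th largest singular value (1-indexed) of a real matrix, i.e. the square root of the
`i`-th largest eigenvalue of `MᵀM`; junk value `0` when `i` is out of range. -/
def svalue {m n : ℕ} (M : Matrix (Fin m) (Fin n) ℝ) (i : ℕ) : ℝ :=
  if h : 1 ≤ i ∧ i ≤ n then
    Real.sqrt ((isHermitian_tmul M).eigenvalues
      (Tuple.sort (isHermitian_tmul M).eigenvalues ⟨n - i, by omega⟩))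
  else 0

/-- Membership in the Stiefel manifold `St(m,r)`. -/
def Stiefel {m r : ℕ} (X : Matrix (Fin m) (Fin r) ℝ) : Prop :=
  Xᵀ * X = 1

/-- The Loewner order on (symmetric) real matrices: `A ⪯ B`. -/
def loewnerLE {m : ℕ} (A B : Matrix (Fin m) (Fin m) ℝ) : Prop :=
  (B - A).PosSemidef

/-- The inverse of the positive semidefinite square root of a matrix (junk value `0` when the
matrix is not positive semidefinite). -/
def sqrtInv {r : ℕ} (S : Matrix (Fin r) (Fin r) ℝ) : Matrix (Fin r) (Fin r) ℝ :=
  haveI := Classical.propDecidable S.PosSemidef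
  if h : S.PosSemidef then
    ((h.1.eigenvectorUnitary : Matrix (Fin r) (Fin r) ℝ) *
      diagonal ((↑) ∘ (√·) ∘ h.1.eigenvalues) *
      (star h.1.eigenvectorUnitary : Matrix (Fin r) (Fin r) ℝ))⁻¹ else 0

/-- The linear sensing map `𝓜` determined by feature matrices `M_i`:
`𝓜(B)_i = Tr(M_iᵀ B)`. -/
def calM {m n : ℕ} (Ms : Fin n → Matrix (Fin m) (Fin m) ℝ)
    (B : Matrix (Fin m) (Fin m) ℝ) : Fin n → ℝ :=
  fun i => ((Ms i)ᵀ * B).trace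

/-- The adjoint `𝓜*` of the sensing map: `𝓜*(y) = ∑ i, y_i M_i`. -/
def calMadj {m n : ℕ} (Ms : Fin n → Matrix (Fin m) (Fin m) ℝ)
    (y : Fin n → ℝ) : Matrix (Fin m) (Fin m) ℝ :=
  ∑ i, y i • Ms i

/-- `(𝓜*𝓜 − 𝓘)(B)`. -/
def calE {m n : ℕ} (Ms : Fin n → Matrix (Fin m) (Fin m) ℝ)
    (B : Matrix (Fin m) (Fin m) ℝ) : Matrix (Fin m) (Fin m) ℝ :=
  calMadj Ms (calM Ms B) - B

/-- The `(s, δ)`-restricted isometry property for the sensing map determined by `Ms`. -/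
def IsRIP {m n : ℕ} (Ms : Fin n → Matrix (Fin m) (Fin m) ℝ) (s : ℕ) (δ : ℝ) : Prop :=
  ∀ B : Matrix (Fin m) (Fin m) ℝ, B.IsSymm → B.rank ≤ s →
    (1 - δ) * frob B ^ 2 ≤ vnorm (calM Ms B) ^ 2 ∧
      vnorm (calM Ms B) ^ 2 ≤ (1 + δ) * frob B ^ 2

/-- The Riemannian gradient on the Stiefel manifold obtained from the Euclidean gradient `g`
at the point `X`. -/
def Rgrad {m r : ℕ} (X g : Matrix (Fin m) (Fin r) ℝ) : Matrix (Fin m) (Fin r) ℝ :=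
  (1 - X * Xᵀ) * g + (2⁻¹ : ℝ) • (X * (Xᵀ * g - gᵀ * X))

/-- One step of Riemannian gradient descent (with `μ = 2`) for the weight-normalized
matrix sensing problem. -/
def RGDstep {m r n : ℕ} (Ms : Fin n → Matrix (Fin m) (Fin m) ℝ)
    (A : Matrix (Fin m) (Fin m) ℝ) (η : ℝ)
    (p : Matrix (Fin m) (Fin r) ℝ × Matrix (Fin r) (Fin r) ℝ) :
    Matrix (Fin m) (Fin r) ℝ × Matrix (Fin r) (Fin r) ℝ :=
  let X := p.1
  let Θ := p.2
  let Gt := calMadj Ms (calM Ms (X * Θ * Xᵀ - A)) * X * Θ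
  let G := Rgrad X Gt
  let X' := (X - η • G) * sqrtInv (1 + η ^ 2 • (Gᵀ * G))
  let Θ' := X'ᵀ * A * X' - X'ᵀ * calE Ms (X' * Θ * X'ᵀ - A) * X'
  (X', Θ')

/-- The standard Gaussian ensemble on `m × r` real matrices (i.i.d. `N(0,1)` entries). -/
def gaussianEnsemble (m r : ℕ) : Measure (Fin m → Fin r → ℝ) :=
  Measure.pi fun _ : Fin m => Measure.pi fun _ : Fin r => gaussianReal 0 1

end

noncomputable section

/-! σ_min(M)² is the least nonzero eigenvalue of MᵀM, so expanding v in an orthonormal eigenbasis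
of MᵀM gives ‖Mv‖ ≥ σ_min(M)‖v‖ whenever v is orthogonal to ker M. A unit right singular vector v
of AB for σ_min(AB) is orthogonal to ker(AB) ⊇ ker B, and A is injective, hence
σ_min(AB) = ‖ABv‖ ≥ σ_min(A)‖Bv‖ ≥ σ_min(A)σ_min(B). If AB = 0, then B = 0 and the left side
vanishes. -/

namespace Fin

open Finset in
theorem ne_zero_iff_sub_card_le {α : Type*} [Zero α] [PartialOrder α] [DecidableEq α] {b : ℕ}
    {g : Fin b → α} (hg : Monotone g) (hg0 : ∀ i, 0 ≤ g i) (i : Fin b) :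
    g i ≠ 0 ↔ b - #{j | g j ≠ 0} ≤ i := by
  constructor
  · intro hi
    have hsub : Ici i ⊆ ({j | g j ≠ 0} : Finset (Fin b)) := fun j hj =>
      mem_filter.mpr ⟨mem_univ _,
        ne_of_gt (lt_of_lt_of_le (lt_of_le_of_ne (hg0 i) (Ne.symm hi)) (hg (mem_Ici.mp hj)))⟩
    have := card_le_card hsub
    rw [Fin.card_Ici] at this
    omega
  · intro hi h0
    have hsub : ({j | g j ≠ 0} : Finset (Fin b)) ⊆ Ioi i := fun j hj => by
      refine mem_Ioi.mpr (lt_of_le_of_ne (not_lt.mp fun hji => ?_) fun hij => ?_)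
      · exact (mem_filter.mp hj).2 (le_antisymm (h0 ▸ hg hji.le) (hg0 j))
      · exact (mem_filter.mp hj).2 (hij ▸ h0)
    have := card_le_card hsub
    rw [Fin.card_Ioi] at this
    omega

end Fin

namespace Matrix.IsHermitian

variable {n : Type*} [Fintype n] [DecidableEq n] {S : Matrix n n ℝ}

theorem dotProduct_eq_sum_eigenvectorBasis (hS : S.IsHermitian) (v w : n → ℝ) :
    v ⬝ᵥ w = ∑ j, (hS.eigenvectorBasis j ⬝ᵥ v) * (hS.eigenvectorBasis j ⬝ᵥ w) := by
  have := hS.eigenvectorBasis.sum_inner_mul_inner (WithLp.toLp 2 v) (WithLp.toLp 2 w)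
  simp only [EuclideanSpace.inner_eq_star_dotProduct, star_trivial] at this
  simpa [dotProduct_comm] using this.symm

theorem eigenvectorBasis_dotProduct_mulVec (hS : S.IsHermitian) (j : n) (v : n → ℝ) :
    hS.eigenvectorBasis j ⬝ᵥ (S *ᵥ v) = hS.eigenvalues j * (hS.eigenvectorBasis j ⬝ᵥ v) := by
  have hST : Sᵀ = S := hS.eq
  rw [dotProduct_mulVec, ← mulVec_transpose, hST, hS.mulVec_eigenvectorBasis,
    smul_dotProduct, smul_eq_mul]

end Matrix.IsHermitian

theorem Matrix.mulVec_injective_of_rank_eq_card {R m n : Type*} [Field R] [Fintype m] [Fintype n]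
    {A : Matrix m n R} (hA : A.rank = Fintype.card n) : Function.Injective A.mulVec := by
  have h := LinearMap.finrank_range_add_finrank_ker A.mulVecLin
  rw [← Matrix.rank, hA, Module.finrank_fintype_fun_eq_card, add_eq_left] at h
  exact LinearMap.ker_eq_bot.mp (Submodule.finrank_eq_zero.mp h)

theorem Matrix.dotProduct_transpose_mul_self_mulVec {R m n : Type*} [CommSemiring R] [Fintype m]
    [Fintype n] (M : Matrix m n R) (x y : n → R) :
    x ⬝ᵥ ((Mᵀ * M) *ᵥ y) = (M *ᵥ x) ⬝ᵥ (M *ᵥ y) := by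
  rw [← mulVec_mulVec, dotProduct_mulVec, vecMul_transpose]

section svalue

variable {a b : ℕ} (M : Matrix (Fin a) (Fin b) ℝ)

theorem svalue_nonneg (i : ℕ) : 0 ≤ svalue M i := by
  unfold svalue
  split_ifs
  exacts [Real.sqrt_nonneg _, le_rfl]

theorem svalue_zero : svalue M 0 = 0 :=
  dif_neg (by omega)

open Finset in
theorem eigenvalues_sort_ne_zero_iff (i : Fin b) :
    (isHermitian_tmul M).eigenvalues (Tuple.sort (isHermitian_tmul M).eigenvalues i) ≠ 0 ↔
      b - M.rank ≤ i := by
  set ev := (isHermitian_tmul M).eigenvalues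
  have hcard : #{j | ev (Tuple.sort ev j) ≠ 0} = M.rank := by
    rw [← rank_transpose_mul_self, (isHermitian_tmul M).rank_eq_card_non_zero_eigs,
      ← Fintype.card_subtype]
    exact Fintype.card_congr ((Tuple.sort ev).subtypeEquiv fun _ => Iff.rfl)
  rw [← hcard]
  exact Fin.ne_zero_iff_sub_card_le (Tuple.monotone_sort ev)
    (fun j => (posSemidef_tmul M).eigenvalues_nonneg _) i

theorem sq_svalue_rank (h : b - M.rank < b) :
    svalue M M.rank ^ 2 =
      (isHermitian_tmul M).eigenvalues (Tuple.sort (isHermitian_tmul M).eigenvalues ⟨_, h⟩) := by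
  rw [svalue, dif_pos ⟨by omega, rank_le_width M⟩,
    Real.sq_sqrt ((posSemidef_tmul M).eigenvalues_nonneg _)]

theorem sq_svalue_rank_le_eigenvalues {j : Fin b} (hj : (isHermitian_tmul M).eigenvalues j ≠ 0) :
    svalue M M.rank ^ 2 ≤ (isHermitian_tmul M).eigenvalues j := by
  set ev := (isHermitian_tmul M).eigenvalues
  set i := (Tuple.sort ev).symm j
  have hi : b - M.rank ≤ i :=
    (eigenvalues_sort_ne_zero_iff M i).mp (by rwa [Equiv.apply_symm_apply])
  calc svalue M M.rank ^ 2 = ev (Tuple.sort ev ⟨b - M.rank, by omega⟩) := sq_svalue_rank M _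
    _ ≤ ev (Tuple.sort ev i) := Tuple.monotone_sort ev (show ⟨b - M.rank, _⟩ ≤ i from hi)
    _ = ev j := by simp [i]

theorem exists_eigenvalues_eq_sq_svalue_rank (hM : M ≠ 0) :
    ∃ j, (isHermitian_tmul M).eigenvalues j ≠ 0 ∧
      (isHermitian_tmul M).eigenvalues j = svalue M M.rank ^ 2 := by
  set ev := (isHermitian_tmul M).eigenvalues
  obtain ⟨j, hj⟩ : ∃ j, ev j ≠ 0 := by
    by_contra! h
    have hMM : Mᴴ * M = 0 := (isHermitian_tmul M).eigenvalues_eq_zero_iff.mp (funext h)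
    exact hM (conjTranspose_mul_self_eq_zero.mp hMM)
  have hi := (eigenvalues_sort_ne_zero_iff M ((Tuple.sort ev).symm j)).mp
    (by rwa [Equiv.apply_symm_apply])
  exact ⟨_, (eigenvalues_sort_ne_zero_iff M ⟨b - M.rank, by omega⟩).mpr le_rfl,
    (sq_svalue_rank M _).symm⟩

theorem sq_svalue_rank_mul_dotProduct_le {v : Fin b → ℝ} (hv : ∀ u, M *ᵥ u = 0 → u ⬝ᵥ v = 0) :
    svalue M M.rank ^ 2 * (v ⬝ᵥ v) ≤ (M *ᵥ v) ⬝ᵥ (M *ᵥ v) := by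
  set hS := isHermitian_tmul M
  rw [← dotProduct_transpose_mul_self_mulVec, hS.dotProduct_eq_sum_eigenvectorBasis v v,
    hS.dotProduct_eq_sum_eigenvectorBasis v, Finset.mul_sum]
  refine Finset.sum_le_sum fun j _ => ?_
  rw [hS.eigenvectorBasis_dotProduct_mulVec]
  by_cases hj : hS.eigenvalues j = 0
  · have hMe : M *ᵥ hS.eigenvectorBasis j = 0 := dotProduct_self_eq_zero.mp (by
      rw [← dotProduct_transpose_mul_self_mulVec, hS.mulVec_eigenvectorBasis, hj, zero_smul,
        dotProduct_zero])
    simp [hv _ hMe]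
  · nlinarith [sq_svalue_rank_le_eigenvalues M hj, mul_self_nonneg (hS.eigenvectorBasis j ⬝ᵥ v)]

theorem exists_dotProduct_self_eq_one_sq_svalue_rank (hM : M ≠ 0) :
    ∃ v : Fin b → ℝ, v ⬝ᵥ v = 1 ∧ (∀ u, M *ᵥ u = 0 → u ⬝ᵥ v = 0) ∧
      (M *ᵥ v) ⬝ᵥ (M *ᵥ v) = svalue M M.rank ^ 2 := by
  set hS := isHermitian_tmul M
  obtain ⟨j, hj0, hj⟩ := exists_eigenvalues_eq_sq_svalue_rank M hM
  have hunit : hS.eigenvectorBasis j ⬝ᵥ hS.eigenvectorBasis j = 1 := by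
    have h := hS.eigenvectorBasis.inner_eq_one j
    rwa [EuclideanSpace.inner_eq_star_dotProduct, star_trivial] at h
  refine ⟨hS.eigenvectorBasis j, hunit, fun u hu => ?_, ?_⟩
  · have h := dotProduct_transpose_mul_self_mulVec M u (hS.eigenvectorBasis j)
    rw [hS.mulVec_eigenvectorBasis, hu, zero_dotProduct, dotProduct_smul, smul_eq_mul] at h
    exact (mul_eq_zero.mp h).resolve_left hj0
  · rw [← dotProduct_transpose_mul_self_mulVec, hS.mulVec_eigenvectorBasis, dotProduct_smul,
      hunit, smul_eq_mul, mul_one, hj]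

end svalue

theorem stmt17_general {m n p : ℕ}
    (A : Matrix (Fin m) (Fin n) ℝ) (hA : A.rank = n)
    (B : Matrix (Fin n) (Fin p) ℝ) :
    svalue A A.rank * svalue B B.rank ≤ svalue (A * B) (A * B).rank := by
  have hAinj := Matrix.mulVec_injective_of_rank_eq_card (hA.trans (Fintype.card_fin n).symm)
  rcases eq_or_ne (A * B) 0 with hAB | hAB
  · have hB : B = 0 := ext_of_mulVec_single fun j => hAinj (by
      rw [mulVec_mulVec, hAB, zero_mulVec, zero_mulVec, mulVec_zero])
    rw [hB, rank_zero, svalue_zero, mul_zero]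
    exact svalue_nonneg _ _
  obtain ⟨v, hv1, hvker, hvAB⟩ := exists_dotProduct_self_eq_one_sq_svalue_rank (A * B) hAB
  have hBv := sq_svalue_rank_mul_dotProduct_le B fun u hu =>
    hvker u (by rw [← mulVec_mulVec, hu, mulVec_zero])
  have hABv := sq_svalue_rank_mul_dotProduct_le A (v := B *ᵥ v) fun u hu => by
    rw [hAinj (hu.trans (mulVec_zero A).symm), zero_dotProduct]
  rw [hv1, mul_one] at hBv
  rw [mulVec_mulVec, hvAB] at hABv
  refine (pow_le_pow_iff_left₀ (mul_nonneg (svalue_nonneg A _) (svalue_nonneg B _))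
    (svalue_nonneg _ _) two_ne_zero).mp ?_
  calc (svalue A A.rank * svalue B B.rank) ^ 2
      = svalue A A.rank ^ 2 * svalue B B.rank ^ 2 := mul_pow _ _ _
    _ ≤ svalue A A.rank ^ 2 * ((B *ᵥ v) ⬝ᵥ (B *ᵥ v)) := by gcongr
    _ ≤ svalue (A * B) (A * B).rank ^ 2 := hABv

theorem stmt17 {m n p : ℕ}
    (A : Matrix (Fin m) (Fin n) ℝ) (hA : A.rank = n)
    (B : Matrix (Fin n) (Fin p) ℝ) (hB : B ≠ 0) :
    svalue A A.rank * svalue B B.rank ≤ svalue (A * B) (A * B).rank :=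
  stmt17_general A hA B

end
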